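/- In the stratified setting, let X be a measurable space, K ≥ 1, F_k probability measures on X, and p_k, p'_k ∈ (0,1) with Σ_k p_k = Σ_k p'_k = 1; let P' on Z = X×{1,…,K} be given by P'(A×{k}) = p'_k F_k(A). Let Θ be a parameter set and ℓ : Θ × Z → [0, L] a bounded measurable loss. Let Z'_1 = (X'_1,S'_1),…,Z'_n = (X'_n,S'_n) be i.i.d. from P' and n'_k = #{i : S'_i = k}. Define R̃_{w*,n}(θ) = (1/n)Σ_{i=1}^n ℓ(θ,Z'_i) Σ_k 1{S'_i=k} p_k/p'_k and R̃_{ŵ*,n}(θ) = Σ_{i=1}^n ℓ(θ,Z'_i) Σ_k 1{S'_i=k} p_k/n'_k. Let ε ∈ (0,1/2) with p'_k ∈ (ε, 1−ε) for all k. Then for every δ ∈ (0,1) and every n ≥ 2 log(2K/δ)/ε², with probability at least 1−δ: min_k n'_k > 0 and, simultaneously for every θ ∈ Θ, |R̃_{ŵ*,n}(θ) − R̃_{w*,n}(θ)| ≤ (2L/ε²)√(log(2K/δ)/(2n)). -/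

import Mathlib

open MeasureTheory

/-- The stratified distribution on `X × Fin K` with stratum probabilities
`p k` and stratum-conditional distributions `F k`, i.e. `P(A × {k}) = p k • F k (A)`. -/
noncomputable def strataMeasure {X : Type*} [MeasurableSpace X] {K : ℕ}
    (p : Fin K → ℝ) (F : Fin K → Measure X) : Measure (X × Fin K) :=
  ∑ k : Fin K, ENNReal.ofReal (p k) • (F k).map (fun x => (x, k))

/-- Number `n'ₖ` of sample points in stratum `k`. -/
def nStratum {X : Type*} {K n : ℕ} (ω : Fin n → X × Fin K) (k : Fin K) : ℕ :=
  (Finset.univ.filter fun i => (ω i).2 = k).card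

/-!
For each stratum `k` the count `n'ₖ` is a sum of `n` i.i.d. Bernoulli(`p'ₖ`) variables, so by
Hoeffding's inequality `|n'ₖ / n - p'ₖ| ≥ t := √(log (2K/δ) / (2n))` has probability at
most `δ / K`, and by a union bound all `K` empirical frequencies are `t`-close to the `p'ₖ`
with probability at least `1 - δ`. On that event every stratum is hit, because
`t ≤ ε / 2 < p'ₖ`, and the two risks differ by at most
`L ∑ₖ pₖ |n'ₖ / n - p'ₖ| / p'ₖ ≤ L t / ε ≤ (2L / ε²) t`.
-/

open ProbabilityTheory

theorem measureReal_le_abs_sum_le_of_iIndepFun {Ω ι : Type*} [MeasurableSpace Ω]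
    {μ : Measure Ω} [IsFiniteMeasure μ] {X : ι → Ω → ℝ} (h_indep : iIndepFun X μ)
    {c : ι → NNReal} {s : Finset ι} (h_subG : ∀ i ∈ s, HasSubgaussianMGF (X i) (c i) μ)
    {r : ℝ} (hr : 0 ≤ r) :
    μ.real {ω | r ≤ |∑ i ∈ s, X i ω|} ≤ 2 * Real.exp (-r ^ 2 / (2 * ∑ i ∈ s, c i)) := by
  have upper := HasSubgaussianMGF.measure_sum_ge_le_of_iIndepFun h_indep h_subG hr
  have lower := HasSubgaussianMGF.measure_sum_ge_le_of_iIndepFun (X := fun i ω => -X i ω)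
    (h_indep.comp (fun _ => Neg.neg) fun _ => measurable_neg)
    (fun i hi => (h_subG i hi).neg) hr
  have hsplit : {ω | r ≤ |∑ i ∈ s, X i ω|} ⊆
      {ω | r ≤ ∑ i ∈ s, X i ω} ∪ {ω | r ≤ ∑ i ∈ s, -X i ω} := fun ω hω => by
    simpa only [Set.mem_union, Set.mem_ofPred_eq, Finset.sum_neg_distrib, ← le_abs] using hω
  calc _ ≤ _ := measureReal_mono hsplit
    _ ≤ _ := measureReal_union_le _ _
    _ ≤ _ := by rw [two_mul]; exact add_le_add upper lower

theorem measureReal_le_abs_mean_sub_integral_le {Ω : Type*} [MeasurableSpace Ω]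
    (ν : Measure Ω) [IsProbabilityMeasure ν] {f : Ω → ℝ} (hf : Measurable f) {a b : ℝ}
    (hab : ∀ x, f x ∈ Set.Icc a b) {n : ℕ} (hn : 0 < n) {r : ℝ} (hr : 0 ≤ r) :
    (Measure.pi fun _ : Fin n => ν).real
        {ω | r ≤ |(1 / (n : ℝ)) * ∑ i, f (ω i) - ∫ x, f x ∂ν|} ≤
      2 * Real.exp (-2 * n * r ^ 2 / (b - a) ^ 2) := by
  set m := ∫ x, f x ∂ν
  have hn' : (0 : ℝ) < n := by exact_mod_cast hn
  have hcoord (i : Fin n) : HasSubgaussianMGF (fun ω : Fin n → Ω => f (ω i) - m)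
      ((‖b - a‖₊ / 2) ^ 2) (Measure.pi fun _ => ν) :=
    .of_map (measurable_pi_apply i).aemeasurable <| by
      rw [(measurePreserving_eval (fun _ => ν) i).map_eq]
      exact hasSubgaussianMGF_of_mem_Icc hf.aemeasurable (ae_of_all _ hab)
  have hbound := measureReal_le_abs_sum_le_of_iIndepFun
    (iIndepFun_pi fun _ => (hf.sub_const m).aemeasurable) (s := Finset.univ)
    (fun i _ => hcoord i) (mul_nonneg hn'.le hr)
  have hset : {ω : Fin n → Ω | r ≤ |(1 / (n : ℝ)) * ∑ i, f (ω i) - m|} =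
      {ω | n * r ≤ |∑ i, (f (ω i) - m)|} := by
    ext ω
    have hmean : (1 / (n : ℝ)) * ∑ i, f (ω i) - m = (∑ i, (f (ω i) - m)) / n := by
      rw [Finset.sum_sub_distrib]
      field_simp
      simp
    rw [Set.mem_ofPred_eq, Set.mem_ofPred_eq, hmean, abs_div, Nat.abs_cast, le_div_iff₀ hn',
      mul_comm]
  rw [hset]
  refine hbound.trans_eq ?_
  push_cast [Finset.sum_const, Finset.card_univ, Fintype.card_fin, nsmul_eq_mul]
  rw [Real.norm_eq_abs, div_pow, sq_abs]
  congr 2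
  field_simp

theorem ofReal_one_sub_le_measure_iInter_compl {Ω ι : Type*} [MeasurableSpace Ω] [Fintype ι]
    (μ : Measure Ω) [IsProbabilityMeasure μ] (B : ι → Set Ω) {δ : ℝ}
    (h : ∑ i, μ.real (B i) ≤ δ) :
    ENNReal.ofReal (1 - δ) ≤ μ (⋂ i, (B i)ᶜ) := by
  rw [← Set.compl_iUnion, ← ofReal_measureReal]
  refine ENNReal.ofReal_le_ofReal ?_
  have hunion : μ.real (⋃ i, B i) ≤ δ := (measureReal_iUnion_fintype_le B).trans h
  have hcover : μ.real Set.univ ≤ μ.real (⋃ i, B i) + μ.real (⋃ i, B i)ᶜ := by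
    rw [← Set.union_compl_self (⋃ i, B i)]
    exact measureReal_union_le _ _
  rw [probReal_univ] at hcover
  linarith

section strataMeasure

variable {X : Type*} [MeasurableSpace X] {K : ℕ} (p : Fin K → ℝ) (F : Fin K → Measure X)
  [∀ k, IsProbabilityMeasure (F k)]

theorem strataMeasure_apply_preimage_snd (s : Finset (Fin K)) :
    strataMeasure p F (Prod.snd ⁻¹' s) = ∑ k ∈ s, ENNReal.ofReal (p k) := by
  have hs : MeasurableSet (Prod.snd ⁻¹' s : Set (X × Fin K)) := measurable_snd trivial
  classical
  simp only [strataMeasure, Measure.coe_finsetSum, Finset.sum_apply, Measure.smul_apply,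
    Measure.map_apply measurable_prodMk_right hs, ← Set.preimage_comp, Function.comp_def,
    Set.preimage_const, Finset.mem_coe, smul_eq_mul]
  simp [apply_ite, Finset.sum_ite_mem]

theorem strataMeasure_setOf_snd_eq (k : Fin K) :
    strataMeasure p F {z | z.2 = k} = ENNReal.ofReal (p k) := by
  simpa [Set.preimage] using strataMeasure_apply_preimage_snd p F {k}

theorem isProbabilityMeasure_strataMeasure (hp : ∀ k, 0 ≤ p k) (hsum : ∑ k, p k = 1) :
    IsProbabilityMeasure (strataMeasure p F) := by
  constructor
  rw [← Set.preimage_univ (f := Prod.snd), ← Finset.coe_univ, strataMeasure_apply_preimage_snd,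
    ← ENNReal.ofReal_sum_of_nonneg fun k _ => hp k, hsum, ENNReal.ofReal_one]

end strataMeasure

section nStratum

variable {X : Type*} {K n : ℕ} (ω : Fin n → X × Fin K)

theorem sum_comp_snd_eq_sum_nStratum_mul {M : Type*} [NonAssocSemiring M] (v : Fin K → M) :
    ∑ i, v (ω i).2 = ∑ k, (nStratum ω k : M) * v k := by
  rw [← Finset.sum_fiberwise Finset.univ (fun i => (ω i).2)]
  refine Finset.sum_congr rfl fun k _ => ?_
  rw [Finset.sum_congr rfl fun i hi => by rw [(Finset.mem_filter.1 hi).2], Finset.sum_const,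
    nsmul_eq_mul]
  rfl

theorem sum_indicator_snd_eq_nStratum {M : Type*} [AddCommMonoidWithOne M] (k : Fin K) :
    ∑ i, {z : X × Fin K | z.2 = k}.indicator 1 (ω i) = (nStratum ω k : M) := by
  simp only [nStratum, Finset.natCast_card_filter, Set.indicator_apply, Set.mem_ofPred_eq,
    Pi.one_apply]

theorem abs_plugin_sub_ideal_le (f : X × Fin K → ℝ) (p p' : Fin K → ℝ) {L : ℝ}
    (hf0 : ∀ z, 0 ≤ f z) (hfL : ∀ z, f z ≤ L) (hp : ∀ k, 0 ≤ p k) (hp' : ∀ k, 0 < p' k)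
    (hpos : ∀ k, 0 < nStratum ω k) :
    |(∑ i, f (ω i) * ∑ k, if (ω i).2 = k then p k / (nStratum ω k : ℝ) else 0) -
        (1 / (n : ℝ)) * ∑ i, f (ω i) * ∑ k, if (ω i).2 = k then p k / p' k else 0| ≤
      L * ∑ k, p k * |(nStratum ω k : ℝ) / n - p' k| / p' k := by
  set h : Fin K → ℝ := fun k => p k / nStratum ω k - p k / (n * p' k)
  have hdiff : (∑ i, f (ω i) * ∑ k, if (ω i).2 = k then p k / (nStratum ω k : ℝ) else 0) -
      (1 / (n : ℝ)) * ∑ i, f (ω i) * (∑ k, if (ω i).2 = k then p k / p' k else 0) =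
      ∑ i, f (ω i) * h (ω i).2 := by
    simp only [Fintype.sum_ite_eq, Finset.mul_sum, ← Finset.sum_sub_distrib, h]
    refine Finset.sum_congr rfl fun i _ => ?_
    ring
  have hfiber (k : Fin K) :
      nStratum ω k * |h k| = p k * |(nStratum ω k : ℝ) / n - p' k| / p' k := by
    have hk : (0 : ℝ) < nStratum ω k := by exact_mod_cast hpos k
    have hn : (0 : ℝ) < n := hk.trans_le <| by
      exact_mod_cast (Finset.card_filter_le _ _).trans_eq (Finset.card_fin n)
    have hprod :
        (nStratum ω k : ℝ) * h k = -(p k * ((nStratum ω k : ℝ) / n - p' k) / p' k) := by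
      simp only [h]
      field_simp [(hp' k).ne']
      ring
    nth_rw 1 [← abs_of_pos hk]
    rw [← abs_mul, hprod, abs_neg, abs_div, abs_mul, abs_of_nonneg (hp k),
      abs_of_pos (hp' k)]
  calc _ = |∑ i, f (ω i) * h (ω i).2| := by rw [hdiff]
    _ ≤ ∑ i, L * |h (ω i).2| := by
      refine (Finset.abs_sum_le_sum_abs _ _).trans (Finset.sum_le_sum fun i _ => ?_)
      rw [abs_mul, abs_of_nonneg (hf0 _)]
      exact mul_le_mul_of_nonneg_right (hfL _) (abs_nonneg _)
    _ = L * ∑ k, p k * |(nStratum ω k : ℝ) / n - p' k| / p' k := by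
      rw [← Finset.mul_sum, sum_comp_snd_eq_sum_nStratum_mul ω fun k => |h k|]
      simp only [hfiber]

end nStratum

theorem measureReal_le_abs_freq_sub_le {X : Type*} [MeasurableSpace X] {K : ℕ}
    (p : Fin K → ℝ) (F : Fin K → Measure X) [∀ k, IsProbabilityMeasure (F k)]
    [IsProbabilityMeasure (strataMeasure p F)] (hp : ∀ k, 0 ≤ p k)
    (k : Fin K) {n : ℕ} (hn : 0 < n) {r : ℝ} (hr : 0 ≤ r) :
    (Measure.pi fun _ : Fin n => strataMeasure p F).real
        {ω | r ≤ |(nStratum ω k : ℝ) / n - p k|} ≤ 2 * Real.exp (-2 * n * r ^ 2) := by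
  have hs : MeasurableSet {z : X × Fin K | z.2 = k} :=
    measurable_snd (measurableSet_singleton k)
  have hbound := measureReal_le_abs_mean_sub_integral_le (strataMeasure p F)
    (f := {z : X × Fin K | z.2 = k}.indicator 1) (measurable_one.indicator hs) (fun z => ?_)
    hn hr (a := 0) (b := 1)
  · simpa [sum_indicator_snd_eq_nStratum, integral_indicator_one hs, measureReal_def,
      strataMeasure_setOf_snd_eq, hp k, div_eq_inv_mul] using hbound
  · by_cases hz : z.2 = k <;> simp [hz]

theorem abs_plugin_sub_ideal_le_of_abs_freq_sub_lt {X Θ : Type*} {K n : ℕ} (hn : 0 < n)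
    (ω : Fin n → X × Fin K) (ℓ : Θ → X × Fin K → ℝ) (p p' : Fin K → ℝ) {L ε t : ℝ}
    (hℓ0 : ∀ θ z, 0 ≤ ℓ θ z) (hℓL : ∀ θ z, ℓ θ z ≤ L) (hp : ∀ k, 0 ≤ p k)
    (hpsum : ∑ k, p k = 1) (hε : 0 < ε) (hεp' : ∀ k, ε < p' k) (htε : t ≤ ε)
    (hclose : ∀ k, |(nStratum ω k : ℝ) / n - p' k| < t) :
    (∀ k, 0 < nStratum ω k) ∧
      ∀ θ, |(∑ i, ℓ θ (ω i) * ∑ k, if (ω i).2 = k then p k / (nStratum ω k : ℝ) else 0) -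
          (1 / (n : ℝ)) * ∑ i, ℓ θ (ω i) * ∑ k, if (ω i).2 = k then p k / p' k else 0| ≤
        L * (t / ε) := by
  have hp' (k : Fin K) : 0 < p' k := hε.trans (hεp' k)
  have hpos (k : Fin K) : 0 < nStratum ω k := by
    have hfreq : 0 < (nStratum ω k : ℝ) / n := by
      linarith [(abs_lt.1 (hclose k)).1, hεp' k]
    exact_mod_cast (div_pos_iff_of_pos_right (by exact_mod_cast hn)).1 hfreq
  refine ⟨hpos, fun θ =>
    (abs_plugin_sub_ideal_le ω (ℓ θ) p p' (hℓ0 θ) (hℓL θ) hp hp' hpos).trans ?_⟩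
  have hL : 0 ≤ L := (hℓ0 θ (ω ⟨0, hn⟩)).trans (hℓL θ _)
  refine mul_le_mul_of_nonneg_left ?_ hL
  calc ∑ k, p k * |(nStratum ω k : ℝ) / n - p' k| / p' k ≤ ∑ k, p k * (t / ε) := by
        refine Finset.sum_le_sum fun k _ => ?_
        rw [mul_div_assoc]
        exact mul_le_mul_of_nonneg_left (div_le_div₀ ((abs_nonneg _).trans (hclose k).le)
          (hclose k).le hε (hεp' k).le) (hp k)
    _ = t / ε := by rw [← Finset.sum_mul, hpsum, one_mul]

theorem sqrt_div_two_mul_le_half {a ε : ℝ} {n : ℕ} (hε : 0 < ε) (hn : 0 < n)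
    (h : 2 * a / ε ^ 2 ≤ n) : √(a / (2 * n)) ≤ ε / 2 := by
  refine Real.sqrt_le_iff.2 ⟨by linarith, ?_⟩
  rw [div_le_iff₀ (by positivity)]
  linarith [(div_le_iff₀ (by positivity)).1 h]

theorem exp_neg_two_mul_sq_sqrt_log_div {c : ℝ} {n : ℕ} (hn : 0 < n) (hc : 1 ≤ c) :
    Real.exp (-2 * n * √(Real.log c / (2 * n)) ^ 2) = c⁻¹ := by
  rw [Real.sq_sqrt (div_nonneg (Real.log_nonneg hc) (by positivity)),
    show -2 * (n : ℝ) * (Real.log c / (2 * n)) = -Real.log c by field_simp, Real.exp_neg,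
    Real.exp_log (by linarith)]

theorem plugin_vs_ideal_weighted_risk_stratified_general
    {X : Type*} [MeasurableSpace X] {Θ : Type*}
    (K : ℕ) (hK : 1 ≤ K)
    (F : Fin K → Measure X) [∀ k, IsProbabilityMeasure (F k)]
    (p p' : Fin K → ℝ)
    (hp : ∀ k, p k ∈ Set.Ioo (0:ℝ) 1)
    (hpsum : ∑ k, p k = 1) (hp'sum : ∑ k, p' k = 1)
    (ℓ : Θ → X × Fin K → ℝ)
    (L : ℝ) (hℓnonneg : ∀ θ z, 0 ≤ ℓ θ z) (hℓle : ∀ θ z, ℓ θ z ≤ L)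
    (ε : ℝ) (hε : ε ∈ Set.Ioo (0:ℝ) (1/2)) (hp'ε : ∀ k, p' k ∈ Set.Ioo ε (1 - ε))
    (n : ℕ) (δ : ℝ) (hδ : δ ∈ Set.Ioo (0:ℝ) 1)
    (hn : 2 * Real.log (2 * K / δ) / ε ^ 2 ≤ (n : ℝ)) :
    ENNReal.ofReal (1 - δ) ≤
      (Measure.pi fun _ : Fin n => strataMeasure p' F)
        {ω | (∀ k, 0 < nStratum ω k) ∧
          ∀ θ : Θ,
            |(∑ i, ℓ θ (ω i) *
                ∑ k, if (ω i).2 = k then p k / (nStratum ω k : ℝ) else 0) -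
              (1 / (n : ℝ)) * ∑ i, ℓ θ (ω i) *
                ∑ k, if (ω i).2 = k then p k / p' k else 0| ≤
            (2 * L / ε ^ 2) * Real.sqrt (Real.log (2 * K / δ) / (2 * n))} := by
  obtain ⟨hε0, hε2⟩ := hε
  have hK1 : (1 : ℝ) ≤ K := by exact_mod_cast hK
  have h2K : 1 < 2 * K / δ := by rw [lt_div_iff₀ hδ.1]; linarith [hδ.2]
  have hlog := Real.log_pos h2K
  have hn0 : 0 < n := by exact_mod_cast (by positivity : (0 : ℝ) < _).trans_le hn
  have hp'0 (k : Fin K) : 0 ≤ p' k := (hε0.trans (hp'ε k).1).le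
  have := isProbabilityMeasure_strataMeasure p' F hp'0 hp'sum
  set t := √(Real.log (2 * K / δ) / (2 * n))
  have hbad (k : Fin K) : (Measure.pi fun _ : Fin n => strataMeasure p' F).real
      {ω | t ≤ |(nStratum ω k : ℝ) / n - p' k|} ≤ δ / K := by
    refine (measureReal_le_abs_freq_sub_le p' F hp'0 k hn0 (Real.sqrt_nonneg _)).trans_eq ?_
    rw [exp_neg_two_mul_sq_sqrt_log_div hn0 h2K.le]
    field_simp
  refine (ofReal_one_sub_le_measure_iInter_compl _
    (fun k => {ω | t ≤ |(nStratum ω k : ℝ) / n - p' k|}) ?_).trans (measure_mono fun ω hω => ?_)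
  · calc _ ≤ ∑ _k : Fin K, δ / K := Finset.sum_le_sum fun k _ => hbad k
      _ = δ := by
        simp only [Finset.sum_const, Finset.card_univ, Fintype.card_fin, nsmul_eq_mul]
        field_simp
  · simp only [Set.mem_iInter, Set.mem_compl_iff, Set.mem_ofPred_eq, not_le] at hω
    obtain ⟨hpos, hrisk⟩ := abs_plugin_sub_ideal_le_of_abs_freq_sub_lt hn0 ω ℓ p p' hℓnonneg
      hℓle (fun k => (hp k).1.le) hpsum hε0 (fun k => (hp'ε k).1)
      ((sqrt_div_two_mul_le_half hε0 hn0 hn).trans (by linarith)) hω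
    refine ⟨hpos, fun θ => (hrisk θ).trans ?_⟩
    have hL : 0 ≤ L := (hℓnonneg θ (ω ⟨0, hn0⟩)).trans (hℓle θ _)
    rw [show 2 * L / ε ^ 2 * t = L * (t / ε) * (2 / ε) by field_simp]
    exact le_mul_of_one_le_right (by positivity) (by rw [le_div_iff₀ hε0]; linarith)

/-- Lemma 3: uniform control of the deviation between the plug-in
weighted empirical risk (weights `p k / n'ₖ`) and the ideally weighted
empirical risk (weights `p k / p' k`), for stratified data; the i.i.d. sample
from `P'` is modelled by the product measure on `Fin n → X × Fin K`. -/
theorem plugin_vs_ideal_weighted_risk_stratified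
    {X : Type*} [MeasurableSpace X] {Θ : Type*}
    (K : ℕ) (hK : 1 ≤ K)
    (F : Fin K → Measure X) [∀ k, IsProbabilityMeasure (F k)]
    (p p' : Fin K → ℝ)
    (hp : ∀ k, p k ∈ Set.Ioo (0:ℝ) 1) (hp' : ∀ k, p' k ∈ Set.Ioo (0:ℝ) 1)
    (hpsum : ∑ k, p k = 1) (hp'sum : ∑ k, p' k = 1)
    (ℓ : Θ → X × Fin K → ℝ) (hℓmeas : ∀ θ, Measurable (ℓ θ))
    (L : ℝ) (hℓnonneg : ∀ θ z, 0 ≤ ℓ θ z) (hℓle : ∀ θ z, ℓ θ z ≤ L)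
    (ε : ℝ) (hε : ε ∈ Set.Ioo (0:ℝ) (1/2)) (hp'ε : ∀ k, p' k ∈ Set.Ioo ε (1 - ε))
    (n : ℕ) (δ : ℝ) (hδ : δ ∈ Set.Ioo (0:ℝ) 1)
    (hn : 2 * Real.log (2 * K / δ) / ε ^ 2 ≤ (n : ℝ)) :
    ENNReal.ofReal (1 - δ) ≤
      (Measure.pi fun _ : Fin n => strataMeasure p' F)
        {ω | (∀ k, 0 < nStratum ω k) ∧
          ∀ θ : Θ,
            |(∑ i, ℓ θ (ω i) *
                ∑ k, if (ω i).2 = k then p k / (nStratum ω k : ℝ) else 0) -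
              (1 / (n : ℝ)) * ∑ i, ℓ θ (ω i) *
                ∑ k, if (ω i).2 = k then p k / p' k else 0| ≤
            (2 * L / ε ^ 2) * Real.sqrt (Real.log (2 * K / δ) / (2 * n))} :=
  plugin_vs_ideal_weighted_risk_stratified_general K hK F p p' hp hpsum hp'sum ℓ L hℓnonneg hℓle ε
    hε hp'ε n δ hδ hn
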